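/- arXiv:1103.4097 — 5 statements merged into one kernel-verified Lean document; each statement's English description precedes it below -/
import Mathlib

section
/- For every natural number k and every σ ∈ V_k, the quadratic relation (D̄ + k)(D̄ − (k+2))σ = 0 holds; explicitly, D̄(D̄σ) − 2·D̄σ − k(k+2)·σ = 0 as a function ℍ → ℍ. -/
/-!
Write `A = Dσ(x)` and `B = D²σ(x)`. Since `L_w L_v σ(x) = A(x w v) + B(x w, x v)`, expanding
`D̄D̄σ` with the multiplication table of `e₁, e₂, e₃` gives
`D̄D̄σ = 2 D̄σ + 3 A x - Σᵢ B(x eᵢ, x eᵢ)`: in the off-diagonal terms the symmetric `B` meets the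
antisymmetric products `eᵢ eⱼ` and drops out. Euler's identity for the degree-`k` components gives
`A x = k σ` and `B(x, x) = k(k-1) σ`. Left multiplication by `x` is `|x|` times an orthogonal map,
so `B(x, x) + Σᵢ B(x eᵢ, x eᵢ)` is `|x|²` times the trace of `B`, which vanishes by harmonicity.
Hence `Σᵢ B(x eᵢ, x eᵢ) = -k(k-1) σ` and `D̄D̄σ - 2 D̄σ = (3k + k(k-1)) σ = k(k+2) σ`.
-/

open Quaternion MvPolynomial

noncomputable section

/-- The standard imaginary quaternion units. -/
def e1 : ℍ[ℝ] := ⟨0, 1, 0, 0⟩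
def e2 : ℍ[ℝ] := ⟨0, 0, 1, 0⟩
def e3 : ℍ[ℝ] := ⟨0, 0, 0, 1⟩

/-- Infinitesimal right translation: `(L_v σ)(x) = Dσ(x)[x·v]`. -/
def Lop (v : ℍ[ℝ]) (σ : ℍ[ℝ] → ℍ[ℝ]) : ℍ[ℝ] → ℍ[ℝ] :=
  fun x => fderiv ℝ σ x (x * v)

/-- The operator `D̄σ = −((L₁σ)·e₁ + (L₂σ)·e₂ + (L₃σ)·e₃)`. -/
def Dbar (σ : ℍ[ℝ] → ℍ[ℝ]) : ℍ[ℝ] → ℍ[ℝ] :=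
  fun x => -(Lop e1 σ x * e1 + Lop e2 σ x * e2 + Lop e3 σ x * e3)

/-- The four real coordinates of a quaternion. -/
def coords (x : ℍ[ℝ]) : Fin 4 → ℝ := ![x.re, x.imI, x.imJ, x.imK]

/-- `σ ∈ V_k`: each of the four real components of `σ` is (given by) a harmonic
polynomial on `ℝ⁴`, homogeneous of degree `k`. -/
def memVk (k : ℕ) (σ : ℍ[ℝ] → ℍ[ℝ]) : Prop :=
  ∀ c : Fin 4, ∃ P : MvPolynomial (Fin 4) ℝ,
    P.IsHomogeneous k ∧ (∑ i : Fin 4, pderiv i (pderiv i P)) = 0 ∧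
    ∀ x : ℍ[ℝ], eval (coords x) P = coords (σ x) c


lemma MvPolynomial.hasFDerivAt_eval {ι : Type*} [Fintype ι] (P : MvPolynomial ι ℝ) (v : ι → ℝ) :
    HasFDerivAt (fun w => eval w P)
      (∑ i, eval v (pderiv i P) • (ContinuousLinearMap.proj i : (ι → ℝ) →L[ℝ] ℝ)) v := by
  classical
  induction P using MvPolynomial.induction_on with
  | C a => simpa using hasFDerivAt_const (𝕜 := ℝ) a v
  | add p q hp hq => simpa [add_smul, Finset.sum_add_distrib] using hp.fun_add hq
  | mul_X p j hp =>
    simp only [eval_mul, eval_X]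
    refine (hp.fun_mul (ContinuousLinearMap.proj j).hasFDerivAt).congr_fderiv ?_
    ext w
    simp [Derivation.leibniz, pderiv_X, Pi.single_apply, apply_ite (eval v), mul_add,
      Finset.sum_add_distrib, Finset.mul_sum, mul_left_comm, mul_comm]

theorem fderiv_fderiv_apply_self_self {E F : Type*} [NormedAddCommGroup E] [NormedSpace ℝ E]
    [NormedAddCommGroup F] [NormedSpace ℝ F] {f : E → F} {x : E} {c : ℝ}
    (hf : DifferentiableAt ℝ f x) (hf' : DifferentiableAt ℝ (fderiv ℝ f) x)
    (heuler : ∀ y, fderiv ℝ f y y = c • f y) :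
    fderiv ℝ (fderiv ℝ f) x x x = (c ^ 2 - c) • f x := by
  have h₁ := hf'.hasFDerivAt.clm_apply (hasFDerivAt_id x)
  have h₂ : HasFDerivAt (fun y => fderiv ℝ f y y) (c • fderiv ℝ f x) x := by
    simpa only [heuler] using hf.hasFDerivAt.fun_const_smul c
  have h := congr($(h₁.unique h₂) x)
  simp only [add_apply, ContinuousLinearMap.comp_apply, ContinuousLinearMap.flip_apply,
    smul_apply, ContinuousLinearMap.coe_id', id_eq, heuler] at h
  linear_combination (norm := module) h

lemma e1_mul_e1 : e1 * e1 = -1 := by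
  ext <;> simp [re_mul, imI_mul, imJ_mul, imK_mul] <;> simp [e1]
lemma e2_mul_e2 : e2 * e2 = -1 := by
  ext <;> simp [re_mul, imI_mul, imJ_mul, imK_mul] <;> simp [e2]
lemma e3_mul_e3 : e3 * e3 = -1 := by
  ext <;> simp [re_mul, imI_mul, imJ_mul, imK_mul] <;> simp [e3]
lemma e1_mul_e2 : e1 * e2 = e3 := by
  ext <;> simp [re_mul, imI_mul, imJ_mul, imK_mul] <;> simp [e1, e2, e3]
lemma e2_mul_e1 : e2 * e1 = -e3 := by
  ext <;> simp [re_mul, imI_mul, imJ_mul, imK_mul] <;> simp [e1, e2, e3]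
lemma e2_mul_e3 : e2 * e3 = e1 := by
  ext <;> simp [re_mul, imI_mul, imJ_mul, imK_mul] <;> simp [e1, e2, e3]
lemma e3_mul_e2 : e3 * e2 = -e1 := by
  ext <;> simp [re_mul, imI_mul, imJ_mul, imK_mul] <;> simp [e1, e2, e3]
lemma e3_mul_e1 : e3 * e1 = e2 := by
  ext <;> simp [re_mul, imI_mul, imJ_mul, imK_mul] <;> simp [e1, e2, e3]
lemma e1_mul_e3 : e1 * e3 = -e2 := by
  ext <;> simp [re_mul, imI_mul, imJ_mul, imK_mul] <;> simp [e1, e2, e3]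

section Lop

variable {σ : ℍ[ℝ] → ℍ[ℝ]} {x : ℍ[ℝ]}

lemma Lop_neg (v : ℍ[ℝ]) : Lop (-v) σ x = -Lop v σ x := by
  simp [Lop]

lemma Lop_one : Lop 1 σ x = fderiv ℝ σ x x := by
  simp [Lop]

lemma hasFDerivAt_Lop (hσ : DifferentiableAt ℝ (fderiv ℝ σ) x) (v : ℍ[ℝ]) :
    HasFDerivAt (Lop v σ)
      ((fderiv ℝ σ x).comp ((ContinuousLinearMap.mul ℝ ℍ[ℝ]).flip v)
        + (fderiv ℝ (fderiv ℝ σ) x).flip (x * v)) x :=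
  hσ.hasFDerivAt.clm_apply ((ContinuousLinearMap.mul ℝ ℍ[ℝ]).flip v).hasFDerivAt

lemma Lop_Lop (hσ : DifferentiableAt ℝ (fderiv ℝ σ) x) (w v : ℍ[ℝ]) :
    Lop w (Lop v σ) x = Lop (w * v) σ x + fderiv ℝ (fderiv ℝ σ) x (x * w) (x * v) := by
  simp [Lop, (hasFDerivAt_Lop hσ v).fderiv, mul_assoc]

lemma Lop_Dbar (hσ : DifferentiableAt ℝ (fderiv ℝ σ) x) (w : ℍ[ℝ]) :
    Lop w (Dbar σ) x
      = -(Lop w (Lop e1 σ) x * e1 + Lop w (Lop e2 σ) x * e2 + Lop w (Lop e3 σ) x * e3) := by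
  have h (v : ℍ[ℝ]) := (hasFDerivAt_Lop hσ v).differentiableAt.hasFDerivAt.mul_const' v
  have hD : HasFDerivAt (Dbar σ) _ x := (((h e1).add (h e2)).add (h e3)).neg
  simp [Lop, hD.fderiv]

lemma Dbar_Dbar_apply (hσ : ContDiffAt ℝ 2 σ x) :
    Dbar (Dbar σ) x = (3 : ℝ) • fderiv ℝ σ x x
      - (fderiv ℝ (fderiv ℝ σ) x (x * e1) (x * e1) + fderiv ℝ (fderiv ℝ σ) x (x * e2) (x * e2)
        + fderiv ℝ (fderiv ℝ σ) x (x * e3) (x * e3)) + (2 : ℝ) • Dbar σ x := by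
  have hd : DifferentiableAt ℝ (fderiv ℝ σ) x :=
    (hσ.fderiv_right (m := 1) le_rfl).differentiableAt one_ne_zero
  have hsymm : IsSymmSndFDerivAt ℝ σ x := hσ.isSymmSndFDerivAt (by simp)
  have hDD : Dbar (Dbar σ) x
      = -(Lop e1 (Dbar σ) x * e1 + Lop e2 (Dbar σ) x * e2 + Lop e3 (Dbar σ) x * e3) := rfl
  rw [hDD, Lop_Dbar hd, Lop_Dbar hd, Lop_Dbar hd]
  simp only [Lop_Lop hd, add_mul, mul_assoc, e1_mul_e1, e2_mul_e2, e3_mul_e3, e1_mul_e2, e2_mul_e1,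
    e2_mul_e3, e3_mul_e2, e3_mul_e1, e1_mul_e3, Lop_neg, Lop_one, mul_neg, mul_one, neg_mul]
  rw [hsymm (x * e2) (x * e1), hsymm (x * e3) (x * e1), hsymm (x * e3) (x * e2)]
  simp only [Dbar, Lop]
  module

end Lop

abbrev quaternionBasis : Module.Basis (Fin 4) ℝ ℍ[ℝ] := QuaternionAlgebra.basisOneIJK _ _ _

lemma quaternionBasis_repr_apply (q : ℍ[ℝ]) (i : Fin 4) :
    quaternionBasis.repr q i = coords q i :=
  rfl

lemma coe_quaternionBasis_equivFunL : ⇑quaternionBasis.equivFunL = coords := rfl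

lemma coords_quaternionBasis (m i : Fin 4) :
    coords (quaternionBasis m) i = if m = i then 1 else 0 := by
  rw [← quaternionBasis_repr_apply, Module.Basis.repr_self, Finsupp.single_apply]

lemma quaternionBasis_zero : quaternionBasis 0 = 1 := by
  rw [Module.Basis.apply_eq_iff]
  ext j; rw [quaternionBasis_repr_apply]; fin_cases j <;> simp [coords]
lemma quaternionBasis_one : quaternionBasis 1 = e1 := by
  rw [Module.Basis.apply_eq_iff]
  ext j; rw [quaternionBasis_repr_apply]; fin_cases j <;> simp [coords, e1]
lemma quaternionBasis_two : quaternionBasis 2 = e2 := by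
  rw [Module.Basis.apply_eq_iff]
  ext j; rw [quaternionBasis_repr_apply]; fin_cases j <;> simp [coords, e2]
lemma quaternionBasis_three : quaternionBasis 3 = e3 := by
  rw [Module.Basis.apply_eq_iff]
  ext j; rw [quaternionBasis_repr_apply]; fin_cases j <;> simp [coords, e3]

lemma sum_apply_mul_quaternionBasis {F : Type*} [NormedAddCommGroup F] [NormedSpace ℝ F]
    (B : ℍ[ℝ] →L[ℝ] ℍ[ℝ] →L[ℝ] F) (x : ℍ[ℝ]) :
    ∑ m, B (x * quaternionBasis m) (x * quaternionBasis m)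
      = normSq x • ∑ m, B (quaternionBasis m) (quaternionBasis m) := by
  simp only [Fin.sum_univ_four, quaternionBasis_zero, quaternionBasis_one, quaternionBasis_two,
    quaternionBasis_three]
  have h0 : x * 1 = x.re • 1 + x.imI • e1 + x.imJ • e2 + x.imK • e3 := by
    ext <;> simp <;> simp [e1, e2, e3]
  have h1 : x * e1 = (-x.imI) • 1 + x.re • e1 + x.imK • e2 + (-x.imJ) • e3 := by
    ext <;> simp [re_mul, imI_mul, imJ_mul, imK_mul] <;> simp [e1, e2, e3]
  have h2 : x * e2 = (-x.imJ) • 1 + (-x.imK) • e1 + x.re • e2 + x.imI • e3 := by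
    ext <;> simp [re_mul, imI_mul, imJ_mul, imK_mul] <;> simp [e1, e2, e3]
  have h3 : x * e3 = (-x.imK) • 1 + x.imJ • e1 + (-x.imI) • e2 + x.re • e3 := by
    ext <;> simp [re_mul, imI_mul, imJ_mul, imK_mul] <;> simp [e1, e2, e3]
  rw [h0, h1, h2, h3, normSq_def']
  simp only [map_add, map_smul, add_apply, smul_apply]
  module

section polyMap

variable (Q : Fin 4 → MvPolynomial (Fin 4) ℝ)

def polyMap (x : ℍ[ℝ]) : ℍ[ℝ] := ∑ c, eval (coords x) (Q c) • quaternionBasis c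

lemma eq_polyMap {σ : ℍ[ℝ] → ℍ[ℝ]} (h : ∀ c x, eval (coords x) (Q c) = coords (σ x) c) :
    σ = polyMap Q := by
  funext x
  simp only [polyMap, h, ← quaternionBasis_repr_apply, quaternionBasis.sum_repr]

lemma contDiff_polyMap {n : WithTop ℕ∞} : ContDiff ℝ n (polyMap Q) :=
  ContDiff.sum fun c _ =>
    ((AnalyticOnNhd.eval_continuousLinearMap (quaternionBasis.equivFunL : ℍ[ℝ] →L[ℝ] (Fin 4 → ℝ))
      (Q c)).contDiff).smul contDiff_const

lemma differentiable_fderiv_polyMap : Differentiable ℝ (fderiv ℝ (polyMap Q)) :=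
  ((contDiff_polyMap Q (n := 2)).fderiv_right (m := 1) le_rfl).differentiable one_ne_zero

lemma fderiv_polyMap_apply (y h : ℍ[ℝ]) :
    fderiv ℝ (polyMap Q) y h = ∑ i, coords h i • polyMap (fun c => pderiv i (Q c)) y := by
  have hQ : HasFDerivAt (polyMap Q) _ y := HasFDerivAt.fun_sum fun c _ =>
    ((hasFDerivAt_eval (Q c) (coords y)).comp y
      (quaternionBasis.equivFunL : ℍ[ℝ] →L[ℝ] (Fin 4 → ℝ)).hasFDerivAt).smul_const
      (quaternionBasis c)
  rw [hQ.fderiv]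
  simp [polyMap, coe_quaternionBasis_equivFunL, Finset.smul_sum, Finset.sum_smul, smul_smul,
    mul_comm]
  exact Finset.sum_comm

lemma fderiv_polyMap_apply_self {k : ℕ} (hQ : ∀ c, (Q c).IsHomogeneous k) (y : ℍ[ℝ]) :
    fderiv ℝ (polyMap Q) y y = (k : ℝ) • polyMap Q y := by
  have heval (c : Fin 4) : ∑ i, coords y i * eval (coords y) (pderiv i (Q c))
      = k * eval (coords y) (Q c) := by
    simpa using congr(eval (coords y) $((hQ c).sum_X_mul_pderiv))
  simp only [fderiv_polyMap_apply, polyMap, Finset.smul_sum, smul_smul]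
  rw [Finset.sum_comm]
  simp only [← Finset.sum_smul, heval]

lemma fderiv_polyMap_quaternionBasis (y : ℍ[ℝ]) (m : Fin 4) :
    fderiv ℝ (polyMap Q) y (quaternionBasis m) = polyMap (fun c => pderiv m (Q c)) y := by
  simp [fderiv_polyMap_apply, coords_quaternionBasis]

lemma fderiv_fderiv_polyMap_quaternionBasis (x : ℍ[ℝ]) (m : Fin 4) :
    fderiv ℝ (fderiv ℝ (polyMap Q)) x (quaternionBasis m) (quaternionBasis m)
      = polyMap (fun c => pderiv m (pderiv m (Q c))) x := by
  have h : (fun y => fderiv ℝ (polyMap Q) y (quaternionBasis m))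
      = polyMap (fun c => pderiv m (Q c)) :=
    funext fun y => fderiv_polyMap_quaternionBasis Q y m
  calc fderiv ℝ (fderiv ℝ (polyMap Q)) x (quaternionBasis m) (quaternionBasis m)
      = fderiv ℝ (fun y => fderiv ℝ (polyMap Q) y (quaternionBasis m)) x (quaternionBasis m) := by
        simp [fderiv_clm_apply (differentiable_fderiv_polyMap Q x) (differentiableAt_const _)]
    _ = _ := by rw [h, fderiv_polyMap_quaternionBasis]

lemma sum_fderiv_fderiv_polyMap_quaternionBasis (x : ℍ[ℝ]) :
    ∑ m, fderiv ℝ (fderiv ℝ (polyMap Q)) x (quaternionBasis m) (quaternionBasis m)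
      = polyMap (fun c => ∑ m, pderiv m (pderiv m (Q c))) x := by
  simp only [fderiv_fderiv_polyMap_quaternionBasis, polyMap, map_sum, Finset.sum_smul]
  exact Finset.sum_comm

end polyMap

theorem quadratic_relation (k : ℕ) (σ : ℍ[ℝ] → ℍ[ℝ]) (hσ : memVk k σ) :
    Dbar (Dbar σ) - (2 : ℝ) • Dbar σ - ((k * (k + 2) : ℝ)) • σ = 0 := by
  choose P hhom hharm hrep using hσ
  obtain rfl := eq_polyMap P hrep
  funext x
  have hsmooth : ContDiff ℝ 2 (polyMap P) := contDiff_polyMap P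
  have heuler := fderiv_polyMap_apply_self P hhom
  have heuler₂ := fderiv_fderiv_apply_self_self (hsmooth.differentiable two_ne_zero x)
    (differentiable_fderiv_polyMap P x) heuler
  have htrace :
      ∑ m, fderiv ℝ (fderiv ℝ (polyMap P)) x (quaternionBasis m) (quaternionBasis m) = 0 := by
    simp [sum_fderiv_fderiv_polyMap_quaternionBasis, polyMap, hharm]
  have hconformal := sum_apply_mul_quaternionBasis (fderiv ℝ (fderiv ℝ (polyMap P)) x) x
  rw [htrace, smul_zero, Fin.sum_univ_four, quaternionBasis_zero, quaternionBasis_one,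
    quaternionBasis_two, quaternionBasis_three, mul_one] at hconformal
  simp only [Pi.sub_apply, Pi.smul_apply, Pi.zero_apply]
  rw [Dbar_Dbar_apply hsmooth.contDiffAt, heuler x]
  linear_combination (norm := module) -hconformal + heuler₂

end
end

section
/- Existence of zone functions: let V be a nonzero finite-dimensional real subspace of the continuous functions S³ → ℍ such that (a) for every σ ∈ V and q ∈ ℍ the pointwise right product σ·q lies in V, and (b) for all s, t ∈ S³ and every σ ∈ V the function x ↦ σ(t⁻¹·x·s) lies in V. Then there exists σ ∈ V with σ(1) ≠ 0 and σ(s⁻¹·x·s) = σ(x) for all s ∈ S³ and all x ∈ S³. -/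
open Quaternion Metric

noncomputable section

/-- The group `S³` of unit quaternions. -/
abbrev S3 : Type := Metric.sphere (0 : ℍ[ℝ]) 1

/-!
Start from any `σ ∈ V` with `σ 1 ≠ 0` (a left translate of a nonzero element) and average its
conjugates `x ↦ σ (s⁻¹ * x * s)` over a Haar measure of the compact group `S³`.
Left invariance of Haar measure makes the average conjugation invariant, its value at `1` is a
positive multiple of `σ 1`, and it stays in `V` because integration commutes with the
evaluations on the finite-dimensional space `V`.
-/

open MeasureTheory

theorem Submodule.exists_apply_one_ne_zero {R G E : Type*} [Semiring R] [MulOneClass G]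
    [AddCommMonoid E] [Module R E] {V : Submodule R (G → E)} (hV : V ≠ ⊥)
    (htrans : ∀ t : G, ∀ σ ∈ V, (fun x => σ (t * x)) ∈ V) :
    ∃ σ ∈ V, σ 1 ≠ 0 := by
  obtain ⟨σ, hσV, hσ⟩ := Submodule.exists_mem_ne_zero_of_ne_bot hV
  obtain ⟨t, ht⟩ := Function.ne_iff.mp hσ
  exact ⟨_, htrans t σ hσV, by simpa using ht⟩

theorem Submodule.exists_mem_apply_eq_integral {X G E : Type*} [TopologicalSpace G]
    [CompactSpace G] [MeasurableSpace G] [OpensMeasurableSpace G] [NormedAddCommGroup E]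
    [NormedSpace ℝ E] [CompleteSpace E] (μ : Measure G) [IsFiniteMeasure μ]
    (V : Submodule ℝ (X → E)) [FiniteDimensional ℝ V] {f : G → V} (hf : Continuous f) :
    ∃ w ∈ V, ∀ x, w x = ∫ s, (f s : X → E) x ∂μ := by
  let e : V ≃L[ℝ] (Fin (Module.finrank ℝ V) → ℝ) :=
    (Module.finBasis ℝ V).equivFun.toContinuousLinearEquiv
  have hint : Integrable (fun s => e (f s)) μ :=
    (e.continuous.comp hf).integrable_of_hasCompactSupport (HasCompactSupport.of_compactSpace _)
  refine ⟨e.symm (∫ s, e (f s) ∂μ), (e.symm _).2, fun x => ?_⟩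
  let ev : (Fin (Module.finrank ℝ V) → ℝ) →L[ℝ] E :=
    (ContinuousLinearMap.proj x).comp (V.subtypeL.comp e.symm.toContinuousLinearMap)
  simpa [ev] using (ev.integral_comp_comm hint).symm

section ConjAverage

variable {G E : Type*} [Group G] [MeasurableSpace G] [NormedAddCommGroup E] [NormedSpace ℝ E]

def conjAverage (μ : Measure G) (σ : G → E) (x : G) : E :=
  ∫ s, σ (s⁻¹ * x * s) ∂μ

theorem conjAverage_one [CompleteSpace E] (μ : Measure G) (σ : G → E) :
    conjAverage μ σ 1 = μ.real Set.univ • σ 1 := by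
  simp [conjAverage, integral_const]

theorem conjAverage_conj [MeasurableMul G] (μ : Measure G) [μ.IsMulLeftInvariant] (σ : G → E)
    (u x : G) : conjAverage μ σ (u⁻¹ * x * u) = conjAverage μ σ x := by
  simpa [conjAverage, mul_assoc] using integral_mul_left_eq_self (fun s => σ (s⁻¹ * x * s)) u

theorem conjAverage_mem [TopologicalSpace G] [IsTopologicalGroup G] [CompactSpace G]
    [OpensMeasurableSpace G] [CompleteSpace E] (μ : Measure G) [IsFiniteMeasure μ]
    {V : Submodule ℝ (G → E)} [FiniteDimensional ℝ V] (hcont : ∀ σ ∈ V, Continuous σ)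
    (hconj : ∀ s : G, ∀ σ ∈ V, (fun x => σ (s⁻¹ * x * s)) ∈ V) {σ : G → E} (hσ : σ ∈ V) :
    conjAverage μ σ ∈ V := by
  have hf : Continuous fun s => (⟨_, hconj s σ hσ⟩ : V) :=
    continuous_pi (fun x => (hcont σ hσ).comp (by fun_prop)) |>.subtype_mk _
  obtain ⟨w, hwV, hw⟩ := V.exists_mem_apply_eq_integral μ hf
  exact (funext hw : w = conjAverage μ σ) ▸ hwV

end ConjAverage

theorem exists_zone_function_general (V : Submodule ℝ (S3 → ℍ[ℝ]))
    (hV0 : V ≠ ⊥) (hfin : FiniteDimensional ℝ V)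
    (hcont : ∀ σ ∈ V, Continuous σ)
    (htrans : ∀ s t : S3, ∀ σ ∈ V, (fun x => σ (t⁻¹ * x * s)) ∈ V) :
    ∃ σ ∈ V, σ 1 ≠ 0 ∧ ∀ (s : S3) (x : S3), σ (s⁻¹ * x * s) = σ x := by
  obtain ⟨σ, hσV, hσ1⟩ := V.exists_apply_one_ne_zero hV0 fun t σ hσ => by
    simpa using htrans 1 t⁻¹ σ hσ
  borelize S3
  let μ : Measure S3 := Measure.haar
  refine ⟨conjAverage μ σ, conjAverage_mem μ hcont (fun s => htrans s s) hσV, ?_,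
    conjAverage_conj μ σ⟩
  rw [conjAverage_one]
  exact smul_ne_zero measureReal_univ_ne_zero hσ1

/-- Existence of zone functions: a nonzero finite-dimensional real subspace `V` of the
continuous functions `S³ → ℍ` which is stable under pointwise right quaternionic
multiplication and under two-sided translations contains a function `σ` with `σ(1) ≠ 0`
which is invariant under conjugation. -/
theorem exists_zone_function (V : Submodule ℝ (S3 → ℍ[ℝ]))
    (hV0 : V ≠ ⊥) (hfin : FiniteDimensional ℝ V)
    (hcont : ∀ σ ∈ V, Continuous σ)
    (hq : ∀ σ ∈ V, ∀ q : ℍ[ℝ], (fun x => σ x * q) ∈ V)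
    (htrans : ∀ s t : S3, ∀ σ ∈ V, (fun x => σ (t⁻¹ * x * s)) ∈ V) :
    ∃ σ ∈ V, σ 1 ≠ 0 ∧ ∀ (s : S3) (x : S3), σ (s⁻¹ * x * s) = σ x :=
  exists_zone_function_general V hV0 hfin hcont htrans

end
end

section
/- Casimir identity: for every natural number k and every σ ∈ V_k, one has −(L₁(L₁σ) + L₂(L₂σ) + L₃(L₃σ)) = k(k+2)·σ. -/
open Quaternion MvPolynomial

noncomputable section

/-!
Each component of `σ` is a polynomial, on which `L_v` acts as the first-order operator
`∑ⱼ (x·v)ⱼ ∂ⱼ`. Expanding the squares gives the operator identity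
`−(L₁² + L₂² + L₃²) = E² + 2E − |x|² Δ`, with `E = ∑ⱼ xⱼ ∂ⱼ` the Euler operator. On harmonic
polynomials homogeneous of degree `k`, Euler's identity makes `E` act as `k` and `Δ` as `0`.
-/

namespace MvPolynomial

theorem pderiv_pderiv_comm {R σ : Type*} [CommRing R] (i j : σ) (p : MvPolynomial σ R) :
    pderiv i (pderiv j p) = pderiv j (pderiv i p) := by
  have hcomm : ⁅pderiv i, pderiv j⁆ = (0 : Derivation R (MvPolynomial σ R) (MvPolynomial σ R)) :=
    derivation_ext fun k => by
      classical
      rw [Derivation.commutator_apply]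
      simp [pderiv_X, Pi.single_apply, apply_ite (pderiv _)]
  rw [← sub_eq_zero, ← Derivation.commutator_apply, hcomm, Derivation.zero_apply]

theorem hasFDerivAt_eval_s6 {𝕜 σ : Type*} [NontriviallyNormedField 𝕜] [Fintype σ]
    (p : MvPolynomial σ 𝕜) (x : σ → 𝕜) :
    HasFDerivAt (fun y => eval y p)
      (∑ j, eval x (pderiv j p) • ContinuousLinearMap.proj (R := 𝕜) (φ := fun _ => 𝕜) j) x := by
  classical
  induction p using MvPolynomial.induction_on with
  | C a =>
    simp only [eval_C]
    exact (hasFDerivAt_const (𝕜 := 𝕜) a x).congr_fderiv (by ext; simp)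
  | add p q hp hq =>
    simp only [map_add]
    exact (hp.add hq).congr_fderiv (by ext; simp [add_mul, Finset.sum_add_distrib])
  | mul_X p i hp =>
    simp only [map_mul, eval_X]
    refine (hp.mul (hasFDerivAt_apply i x)).congr_fderiv ?_
    ext w
    simp only [add_apply, smul_apply, sum_apply, ContinuousLinearMap.proj_apply, smul_eq_mul,
      Derivation.leibniz, pderiv_X, Pi.single_apply, mul_ite, mul_one, mul_zero, map_add,
      apply_ite (eval x), map_zero, map_mul, eval_X, add_mul, ite_mul, zero_mul,
      Finset.sum_add_distrib, Finset.sum_ite_eq, Finset.mem_univ, if_true, Finset.mul_sum, mul_assoc]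

end MvPolynomial

namespace Casimir

abbrev Poly4 := MvPolynomial (Fin 4) ℝ

def mulRightCoords (v : ℍ[ℝ]) : Fin 4 → Poly4 :=
  ![X 0 * C v.re - X 1 * C v.imI - X 2 * C v.imJ - X 3 * C v.imK,
    X 0 * C v.imI + X 1 * C v.re + X 2 * C v.imK - X 3 * C v.imJ,
    X 0 * C v.imJ - X 1 * C v.imK + X 2 * C v.re + X 3 * C v.imI,
    X 0 * C v.imK + X 1 * C v.imJ - X 2 * C v.imI + X 3 * C v.re]

def lopPoly (v : ℍ[ℝ]) (p : Poly4) : Poly4 :=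
  ∑ j, mulRightCoords v j * pderiv j p

def eulerOp (p : Poly4) : Poly4 :=
  ∑ j, X j * pderiv j p

theorem neg_sum_lopPoly_sq (p : Poly4) :
    -(lopPoly e1 (lopPoly e1 p) + lopPoly e2 (lopPoly e2 p) + lopPoly e3 (lopPoly e3 p))
      = eulerOp (eulerOp p) + 2 * eulerOp p
        - (∑ j, X j ^ 2) * ∑ j, pderiv j (pderiv j p) := by
  simp only [lopPoly, eulerOp, mulRightCoords, e1, e2, e3, Fin.sum_univ_four, map_add, map_neg,
    pderiv_mul, pderiv_X, map_zero, map_one, Matrix.cons_val_zero, Matrix.cons_val_one,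
    Matrix.cons_val_two, Matrix.cons_val_three, Matrix.head_cons, Matrix.tail_cons,
    Pi.single_apply, Fin.reduceEq, if_true, if_false, mul_one, mul_zero, zero_mul, add_zero,
    zero_add, sub_zero, zero_sub]
  rw [pderiv_pderiv_comm 1 0 p, pderiv_pderiv_comm 2 0 p, pderiv_pderiv_comm 3 0 p,
    pderiv_pderiv_comm 2 1 p, pderiv_pderiv_comm 3 1 p, pderiv_pderiv_comm 3 2 p]
  ring

theorem eulerOp_smul (r : ℝ) (p : Poly4) : eulerOp (r • p) = r • eulerOp p := by
  simp only [eulerOp, Derivation.map_smul, mul_smul_comm, Finset.smul_sum]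

theorem neg_sum_lopPoly_sq_of_isHomogeneous {k : ℕ} {p : Poly4} (hp : p.IsHomogeneous k)
    (hΔ : ∑ j, pderiv j (pderiv j p) = 0) :
    -(lopPoly e1 (lopPoly e1 p) + lopPoly e2 (lopPoly e2 p) + lopPoly e3 (lopPoly e3 p))
      = ((k * (k + 2) : ℝ)) • p := by
  have hE : eulerOp p = (k : ℝ) • p := by
    rw [Nat.cast_smul_eq_nsmul]
    exact hp.sum_X_mul_pderiv
  rw [neg_sum_lopPoly_sq, hΔ, mul_zero, sub_zero, hE, eulerOp_smul, hE, two_mul]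
  module

def coordsCLE : ℍ[ℝ] ≃L[ℝ] (Fin 4 → ℝ) :=
  LinearEquiv.toContinuousLinearEquiv
    (QuaternionAlgebra.linearEquivTuple (-1 : ℝ) 0 (-1) : ℍ[ℝ] ≃ₗ[ℝ] (Fin 4 → ℝ))

theorem coordsCLE_apply (x : ℍ[ℝ]) : coordsCLE x = coords x := rfl

theorem coords_injective : Function.Injective coords := coordsCLE.injective

def polyMap : (Fin 4 → Poly4) →ₗ[ℝ] ℍ[ℝ] → ℍ[ℝ] where
  toFun P x := coordsCLE.symm fun c => eval (coords x) (P c)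
  map_add' P Q := by
    ext x : 1
    rw [Pi.add_apply, ← map_add]
    congr 1
    ext c
    simp
  map_smul' r P := by
    ext x : 1
    rw [Pi.smul_apply, RingHom.id_apply, ← map_smul]
    congr 1
    ext c
    simp

theorem coords_polyMap (P : Fin 4 → Poly4) (x : ℍ[ℝ]) (c : Fin 4) :
    coords (polyMap P x) c = eval (coords x) (P c) := by
  simp [polyMap, ← coordsCLE_apply]

theorem coords_fderiv_polyMap (P : Fin 4 → Poly4) (x w : ℍ[ℝ]) (c : Fin 4) :
    coords (fderiv ℝ (polyMap P) x w) c = ∑ j, eval (coords x) (pderiv j (P c)) * coords w j := by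
  have hP : HasFDerivAt (polyMap P) _ x :=
    coordsCLE.symm.hasFDerivAt.comp x <| hasFDerivAt_pi.2 fun c =>
      (hasFDerivAt_eval_s6 (P c) (coords x)).comp x coordsCLE.hasFDerivAt
  rw [hP.fderiv, ← coordsCLE_apply]
  simp [coordsCLE_apply]

theorem eval_mulRightCoords (v x : ℍ[ℝ]) (j : Fin 4) :
    eval (coords x) (mulRightCoords v j) = coords (x * v) j := by
  fin_cases j <;> simp [mulRightCoords, coords]

theorem Lop_polyMap (v : ℍ[ℝ]) (P : Fin 4 → Poly4) :
    Lop v (polyMap P) = polyMap fun c => lopPoly v (P c) := by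
  ext x : 1
  refine coords_injective (funext fun c => ?_)
  simp [Lop, coords_fderiv_polyMap, coords_polyMap, lopPoly, eval_mulRightCoords, mul_comm]

theorem exists_polyMap_eq_of_memVk {k : ℕ} {σ : ℍ[ℝ] → ℍ[ℝ]} (h : memVk k σ) :
    ∃ P : Fin 4 → Poly4, (∀ c, (P c).IsHomogeneous k) ∧
      (∀ c, ∑ i, pderiv i (pderiv i (P c)) = 0) ∧ polyMap P = σ := by
  choose P hhom hharm heq using h
  refine ⟨P, hhom, hharm, funext fun x => coords_injective (funext fun c => ?_)⟩
  rw [coords_polyMap, heq]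

end Casimir

open Casimir

theorem casimir_identity (k : ℕ) (σ : ℍ[ℝ] → ℍ[ℝ]) (hσ : memVk k σ) :
    -(Lop e1 (Lop e1 σ) + Lop e2 (Lop e2 σ) + Lop e3 (Lop e3 σ))
      = ((k * (k + 2) : ℝ)) • σ := by
  obtain ⟨P, hhom, hharm, rfl⟩ := exists_polyMap_eq_of_memVk hσ
  simp only [Lop_polyMap, ← map_add, ← map_neg, ← map_smul]
  congr 1
  funext c
  exact neg_sum_lopPoly_sq_of_isHomogeneous (hhom c) (hharm c)
end
end

section
/- For every natural number k and the function f : ℍ → ℂ, f(x) = (z₂(x))^k, one has for all x ∈ ℍ: Df(x)[x·e₁ − e₁·x] = −2k·𝕚·f(x), where Df(x) is the real Fréchet derivative of f at x and x·e₁ − e₁·x is the quaternionic commutator. (Equivalently, f = z₂^k is an eigenvector of eigenvalue 2k of the complexified infinitesimal conjugation action of e₁.) -/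
open Quaternion

noncomputable section

/-- The complex coordinate `z₂(x) = x₂ + x₃·𝕚`. -/
def z2 (x : ℍ[ℝ]) : ℂ := (x.imJ : ℂ) + (x.imK : ℂ) * Complex.I

/-!
The commutator `x ↦ x e₁ - e₁ x` maps `e₂ ↦ 2e₃` and `e₃ ↦ -2e₂`, so on the real-linear
coordinate `z₂` it acts as multiplication by `-2𝕚`. By the chain rule, the derivative of `z₂ᵏ`
in any direction `v` with `z₂(v) = c·z₂(x)` is `k·c·z₂(x)ᵏ`.
-/

theorem fderiv_clm_pow_apply_of_map_eq_mul {𝕜 E 𝔸 : Type*} [NontriviallyNormedField 𝕜]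
    [NormedAddCommGroup E] [NormedSpace 𝕜 E] [NormedCommRing 𝔸] [NormedAlgebra 𝕜 𝔸]
    (L : E →L[𝕜] 𝔸) (k : ℕ) {x v : E} {c : 𝔸} (hv : L v = c * L x) :
    fderiv 𝕜 (fun y => L y ^ k) x v = k * c * L x ^ k := by
  rw [(L.hasFDerivAt.pow k).fderiv]
  cases k with
  | zero => simp
  | succ k =>
    simp only [FunLike.coe_smul, Pi.smul_apply, nsmul_eq_mul, smul_eq_mul, hv]
    push_cast
    ring

def z2CLM : ℍ[ℝ] →L[ℝ] ℂ :=
  LinearMap.toContinuousLinearMap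
    { toFun := z2
      map_add' x y := by simp only [z2, imJ_add, imK_add, Complex.ofReal_add]; ring
      map_smul' r x := by
        simp only [z2, imJ_smul, imK_smul, smul_eq_mul, Complex.ofReal_mul, RingHom.id_apply,
          Complex.real_smul]
        ring }

theorem coe_z2CLM : ⇑z2CLM = z2 := rfl

theorem z2_mul_e1_sub_e1_mul (x : ℍ[ℝ]) :
    z2 (x * e1 - e1 * x) = -2 * Complex.I * z2 x := by
  apply Complex.ext <;> simp [z2, Quaternion.imJ_mul, Quaternion.imK_mul] <;> simp [e1] <;> ring

theorem z2_pow_eigenvector (k : ℕ) :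
    ∀ x : ℍ[ℝ],
      fderiv ℝ (fun y => z2 y ^ k) x (x * e1 - e1 * x)
        = -2 * (k : ℂ) * Complex.I * z2 x ^ k := by
  intro x
  rw [← coe_z2CLM, fderiv_clm_pow_apply_of_map_eq_mul z2CLM k (z2_mul_e1_sub_e1_mul x)]
  ring
end
end

section
/- Lowering-operator diagram: define, for continuously differentiable f : ℍ → ℂ, the operators (Af)(x) = −(1/2)·Df(x)[x·e₂] + (𝕚/2)·Df(x)[x·e₃] and (Bf)(x) = (1/2)·Df(x)[e₂·x] − (𝕚/2)·Df(x)[e₃·x] (quaternion products inside the derivative directions). Then, with g₂ = z₂, ḡ₂ = conj(z₂), g₋₁ = −z₁, ḡ₁ = conj(z₁): A g₂ = g₋₁, B g₂ = ḡ₁, A g₋₁ = 0, B g₋₁ = ḡ₂, A ḡ₁ = ḡ₂, B ḡ₁ = 0, A ḡ₂ = 0, and B ḡ₂ = 0. -/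
open Quaternion

noncomputable section

/-- The complex coordinate `z₁(x) = x₀ + x₁·𝕚`. -/
def z1 (x : ℍ[ℝ]) : ℂ := (x.re : ℂ) + (x.imI : ℂ) * Complex.I

/-- The lowering operator `A`: `(Af)(x) = −(1/2)·Df(x)[x·e₂] + (𝕚/2)·Df(x)[x·e₃]`. -/
def Aop (f : ℍ[ℝ] → ℂ) : ℍ[ℝ] → ℂ :=
  fun x => -(1 / 2 : ℂ) * fderiv ℝ f x (x * e2) + (Complex.I / 2) * fderiv ℝ f x (x * e3)

/-- The lowering operator `B`: `(Bf)(x) = (1/2)·Df(x)[e₂·x] − (𝕚/2)·Df(x)[e₃·x]`. -/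
def Bop (f : ℍ[ℝ] → ℂ) : ℍ[ℝ] → ℂ :=
  fun x => (1 / 2 : ℂ) * fderiv ℝ f x (e2 * x) - (Complex.I / 2) * fderiv ℝ f x (e3 * x)

/-- `g₂ = z₂`. -/
def g2 : ℍ[ℝ] → ℂ := z2
/-- `ḡ₂ = conj(z₂)`. -/
def g2bar : ℍ[ℝ] → ℂ := fun x => (starRingEnd ℂ) (z2 x)
/-- `g₋₁ = −z₁`. -/
def gm1 : ℍ[ℝ] → ℂ := fun x => -z1 x
/-- `ḡ₁ = conj(z₁)`. -/
def g1bar : ℍ[ℝ] → ℂ := fun x => (starRingEnd ℂ) (z1 x)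

/-
Each of the four functions is an `ℝ`-linear map `ℍ → ℂ`, so its derivative at every point is the
map itself. Hence `A` and `B` send the linear map with values `a, b, c, d` on `1, i, j, k` to the
linear map whose values are read off from the products `x·j`, `x·k`, `j·x`, `k·x`, and the diagram
becomes eight computations with coefficient vectors.
-/

def quatFunctional (a b c d : ℂ) : ℍ[ℝ] →L[ℝ] ℂ :=
  LinearMap.toContinuousLinearMap
  { toFun := fun v => v.re * a + v.imI * b + v.imJ * c + v.imK * d
    map_add' := fun v w => by
      push_cast [Quaternion.re_add, Quaternion.imI_add, Quaternion.imJ_add, Quaternion.imK_add]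
      ring
    map_smul' := fun r v => by
      simp only [Quaternion.re_smul, Quaternion.imI_smul, Quaternion.imJ_smul, Quaternion.imK_smul,
        smul_eq_mul, Complex.real_smul, Complex.ofReal_mul, RingHom.id_apply]
      ring }

@[simp]
theorem quatFunctional_apply (a b c d : ℂ) (v : ℍ[ℝ]) :
    quatFunctional a b c d v = v.re * a + v.imI * b + v.imJ * c + v.imK * d :=
  rfl

theorem coe_quatFunctional_zero : ⇑(quatFunctional 0 0 0 0) = 0 := by
  ext v; simp

theorem Aop_continuousLinearMap (L : ℍ[ℝ] →L[ℝ] ℂ) :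
    Aop L = fun x => -(1 / 2 : ℂ) * L (x * e2) + (Complex.I / 2) * L (x * e3) := by
  funext x
  simp only [Aop, ContinuousLinearMap.fderiv]

theorem Bop_continuousLinearMap (L : ℍ[ℝ] →L[ℝ] ℂ) :
    Bop L = fun x => (1 / 2 : ℂ) * L (e2 * x) - (Complex.I / 2) * L (e3 * x) := by
  funext x
  simp only [Bop, ContinuousLinearMap.fderiv]

theorem Aop_quatFunctional (a b c d : ℂ) :
    Aop (quatFunctional a b c d) = quatFunctional
      ((-c + Complex.I * d) / 2) ((-d - Complex.I * c) / 2)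
      ((a + Complex.I * b) / 2) ((b - Complex.I * a) / 2) := by
  rw [Aop_continuousLinearMap]
  ext x
  simp only [quatFunctional_apply, Quaternion.re_mul, Quaternion.imI_mul, Quaternion.imJ_mul,
    Quaternion.imK_mul]
  simp only [e2, e3]
  push_cast
  ring

theorem Bop_quatFunctional (a b c d : ℂ) :
    Bop (quatFunctional a b c d) = quatFunctional
      ((c - Complex.I * d) / 2) ((-d - Complex.I * c) / 2)
      ((-a + Complex.I * b) / 2) ((b + Complex.I * a) / 2) := by
  rw [Bop_continuousLinearMap]
  ext x
  simp only [quatFunctional_apply, Quaternion.re_mul, Quaternion.imI_mul, Quaternion.imJ_mul,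
    Quaternion.imK_mul]
  simp only [e2, e3]
  push_cast
  ring

theorem g2_eq : g2 = quatFunctional 0 0 1 Complex.I := by
  ext x; simp [g2, z2]

theorem gm1_eq : gm1 = quatFunctional (-1) (-Complex.I) 0 0 := by
  ext x; simp only [gm1, z1, quatFunctional_apply]; ring

theorem g1bar_eq : g1bar = quatFunctional 1 (-Complex.I) 0 0 := by
  ext x; simp [g1bar, z1]

theorem g2bar_eq : g2bar = quatFunctional 0 0 1 (-Complex.I) := by
  ext x; simp [g2bar, z2]

/-- The lowering-operator diagram on `g₂`, `g₋₁`, `ḡ₁`, `ḡ₂`. -/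
theorem lowering_diagram :
    Aop g2 = gm1 ∧ Bop g2 = g1bar ∧
    Aop gm1 = 0 ∧ Bop gm1 = g2bar ∧
    Aop g1bar = g2bar ∧ Bop g1bar = 0 ∧
    Aop g2bar = 0 ∧ Bop g2bar = 0 := by
  simp only [g2_eq, gm1_eq, g1bar_eq, g2bar_eq, Aop_quatFunctional, Bop_quatFunctional,
    ← coe_quatFunctional_zero]
  refine ⟨?_, ?_, ?_, ?_, ?_, ?_, ?_, ?_⟩ <;> congr 2 <;> ring_nf <;> norm_num

end
end
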